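/- Let x be a non-uniform lattice of either class, δ ∈ ℝ and λ ∈ ℂ, and define σ*(z), τ*_δ(z) as in the context and λ*_δ := λ − κ_{2δ−1}. Then at every z ∈ ℂ where the occurring denominators are nonzero: (i) σ(z) = σ*(z−1) + τ*_δ(z−1)·∇x_{δ−1}(z); (ii) τ_δ(z) = (σ*(z+1) − σ*(z−1) − τ*_δ(z−1)·∇x_{δ−1}(z))/Δx_{δ−1}(z); (iii) λ = λ*_δ − Δ_{δ−1}[(τ*_δ(z−1)·∇x_{δ−1}(z) − ∇σ*(z))/∇x_δ(z)]. (Proposition 3.2, with δ = ν−μ) -/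

import Mathlib

/-!
Parts (i) and (ii) are rearrangements of the definitions of `σ*` and `τ*_δ`. For (iii), the
defining relation of `τ_δ` at `z - 1` turns the bracket into `-τ_{δ-1}(z) ∇x_δ(z)`, so it suffices
that `τ_{δ-1}` is a polynomial of degree one in `x_{δ-1}` with leading coefficient `κ_{2δ-1}`.
With `t = u + ν/2`, every point at which `τ_ν(u)` evaluates `x` is `t ± ν/2` or `t ± (ν ± 1)/2`.
Both classes of lattices satisfy `x(t + μ/2) - x(t - μ/2) = γ(μ) (x(t + 1/2) - x(t - 1/2))` and
`x(t + μ/2) + x(t - μ/2) = 2 α(μ) x(t) + b(μ)`, which express `τ_ν(u)` as an affine function of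
`x(t) = x_ν(u)`; the addition formula `γ(μ + ν) = α(μ) γ(ν) + γ(μ) α(ν)` identifies its slope
as `κ_{2ν+1}`.
-/

noncomputable section

open Finset

/-- `x` is a non-uniform lattice of one of the two classes (q-quadratic with
`q = e^w`, or quadratic), together with its associated functions `α = a` and
`γ = g`. -/
def IsNonUniformLattice (w : ℂ) (x : ℂ → ℂ) (a g : ℝ → ℂ) : Prop :=
  (Complex.exp w ≠ 1 ∧
    ∃ c1 c2 c3 : ℂ, c1 * c2 ≠ 0 ∧
      (∀ s : ℂ, x s = c1 * Complex.exp (s * w) + c2 * Complex.exp (-(s * w)) + c3) ∧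
      (∀ μ : ℝ, a μ =
        (Complex.exp ((μ : ℂ) / 2 * w) + Complex.exp (-((μ : ℂ) / 2 * w))) / 2) ∧
      (∀ μ : ℝ, g μ =
        (Complex.exp ((μ : ℂ) / 2 * w) - Complex.exp (-((μ : ℂ) / 2 * w))) /
          (Complex.exp ((1 : ℂ) / 2 * w) - Complex.exp (-((1 : ℂ) / 2 * w))))) ∨
  (∃ c1 c2 c3 : ℂ, c1 ≠ 0 ∧
    (∀ s : ℂ, x s = c1 * s ^ 2 + c2 * s + c3) ∧
    (∀ μ : ℝ, a μ = 1) ∧ (∀ μ : ℝ, g μ = (μ : ℂ)))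

/-- `xl x ν s = x_ν(s) = x (s + ν/2)`. -/
def xl (x : ℂ → ℂ) (ν : ℝ) (s : ℂ) : ℂ := x (s + (ν : ℂ) / 2)

/-- `σ(z) = σ̃(x z) - (1/2)·τ̃(x z)·∇x₁(z)`. -/
def sig (x : ℂ → ℂ) (st tt : Polynomial ℂ) (z : ℂ) : ℂ :=
  st.eval (x z) - (1 / 2) * tt.eval (x z) * (xl x 1 z - xl x 1 (z - 1))

/-- `κ_ν = α(ν-1)·τ̃' + (1/2)·γ(ν-1)·σ̃''`. -/
def kap (a g : ℝ → ℂ) (st tt : Polynomial ℂ) (ν : ℝ) : ℂ :=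
  a (ν - 1) * tt.coeff 1 + (1 / 2) * g (ν - 1) * (2 * st.coeff 2)

/-- Backward difference quotient `∇_ν f (z) = ∇f(z)/∇x_ν(z)`. -/
def nab (x : ℂ → ℂ) (ν : ℝ) (f : ℂ → ℂ) (z : ℂ) : ℂ :=
  (f z - f (z - 1)) / (xl x ν z - xl x ν (z - 1))

/-- Forward difference quotient `Δ_ν f (z) = Δf(z)/Δx_ν(z)`. -/
def del (x : ℂ → ℂ) (ν : ℝ) (f : ℂ → ℂ) (z : ℂ) : ℂ :=
  (f (z + 1) - f z) / (xl x ν (z + 1) - xl x ν z)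

/-- Generalized power `[x_α(s) - x_α(z)]^{(m)} = ∏_{k=0}^{m-1} (x_α(s) - x_α(z-k))`. -/
def gp (x : ℂ → ℂ) (m : ℕ) (al : ℝ) (s z : ℂ) : ℂ :=
  ∏ k ∈ Finset.range m, (xl x al s - xl x al (z - (k : ℂ)))

/-- The defining relation for the family `τ_ν = T ν`:
`τ_ν(z)·∇x_{ν+1}(z) = σ(z+ν) - σ(z) + τ(z+ν)·∇x₁(z+ν)`. -/
def TauFamily (x : ℂ → ℂ) (st tt : Polynomial ℂ) (T : ℝ → ℂ → ℂ) : Prop :=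
  ∀ (ν : ℝ) (z : ℂ),
    T ν z * (xl x (ν + 1) z - xl x (ν + 1) (z - 1)) =
      sig x st tt (z + (ν : ℂ)) - sig x st tt z +
        tt.eval (x (z + (ν : ℂ))) * (xl x 1 (z + (ν : ℂ)) - xl x 1 (z + (ν : ℂ) - 1))

/-- Adjoint data: `σ*(z) = σ(z-1) + τ_δ(z-1)·∇x_{δ-1}(z)`. -/
def sigStar (x : ℂ → ℂ) (st tt : Polynomial ℂ) (T : ℝ → ℂ → ℂ) (δ : ℝ) (z : ℂ) : ℂ :=
  sig x st tt (z - 1) + T δ (z - 1) * (xl x (δ - 1) z - xl x (δ - 1) (z - 1))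

/-- Adjoint data: `τ*_δ(z) = (σ(z+1) - σ(z-1) - τ_δ(z-1)·∇x_{δ-1}(z)) / Δx_{δ-1}(z)`. -/
def tauStar (x : ℂ → ℂ) (st tt : Polynomial ℂ) (T : ℝ → ℂ → ℂ) (δ : ℝ) (z : ℂ) : ℂ :=
  (sig x st tt (z + 1) - sig x st tt (z - 1) -
      T δ (z - 1) * (xl x (δ - 1) z - xl x (δ - 1) (z - 1))) /
    (xl x (δ - 1) (z + 1) - xl x (δ - 1) z)

open Polynomial in
theorem Polynomial.eval_eq_of_degree_le_two {R : Type*} [Semiring R] {p : R[X]}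
    (hp : p.degree ≤ 2) (y : R) :
    p.eval y = p.coeff 0 + p.coeff 1 * y + p.coeff 2 * y ^ 2 := by
  rw [eval_eq_sum_range' ((natDegree_le_iff_degree_le.mpr hp).trans_lt (by norm_num : 2 < 3))]
  simp [Finset.sum_range_succ]

open Polynomial in
theorem Polynomial.eval_eq_of_degree_le_one {R : Type*} [Semiring R] {p : R[X]}
    (hp : p.degree ≤ 1) (y : R) :
    p.eval y = p.coeff 0 + p.coeff 1 * y := by
  rw [eq_X_add_C_of_degree_le_one hp]
  simp [add_comm]

structure LatticeIdentities (x : ℂ → ℂ) (a g b : ℝ → ℂ) : Prop where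
  sub_eq : ∀ (s : ℂ) (μ : ℝ),
    x (s + μ / 2) - x (s - μ / 2) = g μ * (x (s + 1 / 2) - x (s - 1 / 2))
  add_eq : ∀ (s : ℂ) (μ : ℝ), x (s + μ / 2) + x (s - μ / 2) = 2 * a μ * x s + b μ
  g_add : ∀ μ ν : ℝ, g (μ + ν) = a μ * g ν + g μ * a ν
  g_add_one_sub_g_sub_one : ∀ μ : ℝ, g (μ + 1) - g (μ - 1) = 2 * a μ

/-- `τ_ν(z) ∇x_{ν+1}(z)`, the right-hand side of `TauFamily`. -/
def tauNum (x : ℂ → ℂ) (st tt : Polynomial ℂ) (ν : ℝ) (z : ℂ) : ℂ :=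
  sig x st tt (z + ν) - sig x st tt z +
    tt.eval (x (z + ν)) * (xl x 1 (z + ν) - xl x 1 (z + ν - 1))

namespace LatticeIdentities

variable {x : ℂ → ℂ} {a g b : ℝ → ℂ}

theorem kap_two_mul_add_one (hL : LatticeIdentities x a g b) (st tt : Polynomial ℂ) (ν : ℝ) :
    kap a g st tt (2 * ν + 1) = 2 * st.coeff 2 * a ν * g ν +
      tt.coeff 1 / 2 * (a ν * (g (ν + 1) - g (ν - 1)) + g ν * (a (ν + 1) - a (ν - 1))) := by
  have h₀ := hL.g_add ν ν
  have hp := hL.g_add ν (ν + 1)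
  have hm := hL.g_add ν (ν - 1)
  have h₂ := hL.g_add_one_sub_g_sub_one (2 * ν)
  rw [← two_mul] at h₀
  rw [show ν + (ν + 1) = 2 * ν + 1 by ring] at hp
  rw [show ν + (ν - 1) = 2 * ν - 1 by ring] at hm
  simp only [kap, add_sub_cancel_right]
  linear_combination st.coeff 2 * h₀ + tt.coeff 1 / 2 * (hp - hm - h₂)

theorem exists_tauNum_eq (hL : LatticeIdentities x a g b) {st tt : Polynomial ℂ}
    (hst : st.degree ≤ 2) (htt : tt.degree ≤ 1) (ν : ℝ) :
    ∃ β : ℂ, ∀ u : ℂ, tauNum x st tt ν u =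
      (kap a g st tt (2 * ν + 1) * xl x ν u + β) * (xl x (ν + 1) u - xl x (ν + 1) (u - 1)) := by
  refine ⟨g ν * (st.coeff 1 + st.coeff 2 * b ν) + tt.coeff 0 * a ν +
    tt.coeff 1 / 4 * (b ν * (g (ν + 1) - g (ν - 1)) + g ν * (b (ν + 1) - b (ν - 1))),
    fun u => ?_⟩
  have hs := hL.sub_eq (u + ν / 2) ν
  have hsp := hL.sub_eq (u + ν / 2) (ν + 1)
  have hsm := hL.sub_eq (u + ν / 2) (ν - 1)
  have ha := hL.add_eq (u + ν / 2) ν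
  have hap := hL.add_eq (u + ν / 2) (ν + 1)
  have ham := hL.add_eq (u + ν / 2) (ν - 1)
  have hg := hL.g_add_one_sub_g_sub_one ν
  rw [hL.kap_two_mul_add_one]
  simp only [tauNum, sig, xl, Polynomial.eval_eq_of_degree_le_two hst,
    Polynomial.eval_eq_of_degree_le_one htt]
  push_cast at *
  simp only [show u + ↑ν / 2 + ↑ν / 2 = u + ↑ν by ring, show u + ↑ν / 2 - ↑ν / 2 = u by ring,
    show u + ↑ν / 2 + 1 / 2 = u + (↑ν + 1) / 2 by ring,
    show u + ↑ν / 2 - 1 / 2 = u - 1 + (↑ν + 1) / 2 by ring,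
    show u + ↑ν / 2 + (↑ν + 1) / 2 = u + ↑ν + 1 / 2 by ring,
    show u + ↑ν / 2 - (↑ν + 1) / 2 = u - 1 + 1 / 2 by ring,
    show u + ↑ν / 2 + (↑ν - 1) / 2 = u + ↑ν - 1 + 1 / 2 by ring,
    show u + ↑ν / 2 - (↑ν - 1) / 2 = u + 1 / 2 by ring] at hs hsp hsm ha hap ham
  set A := x (u + ↑ν)
  set B := x u
  set D := x (u + (↑ν + 1) / 2) - x (u - 1 + (↑ν + 1) / 2)
  set Dp := x (u + ↑ν + 1 / 2) - x (u + ↑ν - 1 + 1 / 2)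
  set Dm := x (u + 1 / 2) - x (u - 1 + 1 / 2)
  linear_combination st.coeff 1 * hs + st.coeff 2 * ((A + B) * hs + g ν * D * ha) +
    tt.coeff 0 / 2 * (hsp - hsm + D * hg) +
    tt.coeff 1 / 4 * ((A + B) * (hsp - hsm) + (g (ν + 1) - g (ν - 1)) * D * ha +
      (Dp - Dm) * hs + g ν * D * (hap - ham))

theorem del_tauNum_div (hL : LatticeIdentities x a g b) {st tt : Polynomial ℂ}
    (hst : st.degree ≤ 2) (htt : tt.degree ≤ 1) (ν : ℝ) {z : ℂ}
    (hfwdν : xl x ν (z + 1) - xl x ν z ≠ 0)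
    (hfwd : xl x (ν + 1) (z + 1) - xl x (ν + 1) z ≠ 0)
    (hbwd : xl x (ν + 1) z - xl x (ν + 1) (z - 1) ≠ 0) :
    del x ν (fun u => tauNum x st tt ν u / (xl x (ν + 1) u - xl x (ν + 1) (u - 1))) z =
      kap a g st tt (2 * ν + 1) := by
  obtain ⟨β, hβ⟩ := hL.exists_tauNum_eq hst htt ν
  simp only [del, hβ, add_sub_cancel_right]
  field_simp
  ring

end LatticeIdentities

theorem latticeIdentities_of_quadratic {x : ℂ → ℂ} {a g : ℝ → ℂ} {c1 c2 c3 : ℂ}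
    (hx : ∀ s : ℂ, x s = c1 * s ^ 2 + c2 * s + c3) (ha : ∀ μ : ℝ, a μ = 1)
    (hg : ∀ μ : ℝ, g μ = (μ : ℂ)) :
    LatticeIdentities x a g (fun μ => c1 * μ ^ 2 / 2) where
  sub_eq s μ := by simp only [hx, hg]; ring
  add_eq s μ := by simp only [hx, ha]; ring
  g_add μ ν := by simp only [ha, hg]; push_cast; ring
  g_add_one_sub_g_sub_one μ := by simp only [ha, hg]; push_cast; ring

open Complex in
theorem latticeIdentities_of_qQuadratic {w c1 c2 c3 : ℂ} {x : ℂ → ℂ} {a g : ℝ → ℂ}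
    (hw : exp w ≠ 1)
    (hx : ∀ s : ℂ, x s = c1 * exp (s * w) + c2 * exp (-(s * w)) + c3)
    (ha : ∀ μ : ℝ, a μ = (exp ((μ : ℂ) / 2 * w) + exp (-((μ : ℂ) / 2 * w))) / 2)
    (hg : ∀ μ : ℝ, g μ = (exp ((μ : ℂ) / 2 * w) - exp (-((μ : ℂ) / 2 * w))) /
      (exp ((1 : ℂ) / 2 * w) - exp (-((1 : ℂ) / 2 * w)))) :
    LatticeIdentities x a g (fun μ => 2 * c3 * (1 - a μ)) := by
  simp only [exp_neg] at hx ha hg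
  have hP : exp ((1 : ℂ) / 2 * w) - (exp ((1 : ℂ) / 2 * w))⁻¹ ≠ 0 := by
    rw [sub_ne_zero, ← exp_neg]
    intro h
    apply hw
    calc exp w = exp ((1 : ℂ) / 2 * w) * exp ((1 : ℂ) / 2 * w) := by rw [← exp_add]; ring_nf
      _ = exp ((1 : ℂ) / 2 * w) * exp (-((1 : ℂ) / 2 * w)) := by rw [← h]
      _ = 1 := by rw [← exp_add, add_neg_cancel, exp_zero]
  have hK := inv_mul_cancel₀ hP
  have hadd : ∀ s r : ℂ, exp ((s + r) * w) = exp (s * w) * exp (r * w) := fun s r => by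
    rw [add_mul, exp_add]
  have hsub : ∀ s r : ℂ, exp ((s - r) * w) = exp (s * w) * (exp (r * w))⁻¹ := fun s r => by
    rw [sub_mul, exp_sub, div_eq_mul_inv]
  refine ⟨fun s μ => ?_, fun s μ => ?_, fun μ ν => ?_, fun μ => ?_⟩
  · simp only [hx, hadd, hsub, hg, mul_inv, inv_inv]
    linear_combination -(exp ((μ : ℂ) / 2 * w) - (exp ((μ : ℂ) / 2 * w))⁻¹) *
      (c1 * exp (s * w) - c2 * (exp (s * w))⁻¹) * hK
  · simp only [hx, hadd, hsub, ha, mul_inv, inv_inv]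
    ring
  · have hμν : exp (((μ + ν : ℝ) : ℂ) / 2 * w) =
        exp ((μ : ℂ) / 2 * w) * exp ((ν : ℂ) / 2 * w) := by
      rw [← hadd]; push_cast; ring_nf
    simp only [ha, hg, hμν]
    ring
  · have hp : exp (((μ + 1 : ℝ) : ℂ) / 2 * w) =
        exp ((μ : ℂ) / 2 * w) * exp ((1 : ℂ) / 2 * w) := by
      rw [← hadd]; push_cast; ring_nf
    have hm : exp (((μ - 1 : ℝ) : ℂ) / 2 * w) =
        exp ((μ : ℂ) / 2 * w) * (exp ((1 : ℂ) / 2 * w))⁻¹ := by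
      rw [← hsub]; push_cast; ring_nf
    simp only [ha, hg, hp, hm, mul_inv, inv_inv]
    linear_combination (exp ((μ : ℂ) / 2 * w) + (exp ((μ : ℂ) / 2 * w))⁻¹) * hK

theorem IsNonUniformLattice.exists_latticeIdentities {w : ℂ} {x : ℂ → ℂ} {a g : ℝ → ℂ}
    (hlat : IsNonUniformLattice w x a g) : ∃ b : ℝ → ℂ, LatticeIdentities x a g b := by
  rcases hlat with ⟨hw, c1, c2, c3, -, hx, ha, hg⟩ | ⟨c1, c2, c3, -, hx, ha, hg⟩
  · exact ⟨_, latticeIdentities_of_qQuadratic hw hx ha hg⟩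
  · exact ⟨_, latticeIdentities_of_quadratic hx ha hg⟩

section Adjoint

variable (x : ℂ → ℂ) (st tt : Polynomial ℂ) (T : ℝ → ℂ → ℂ) (δ : ℝ)

theorem sig_eq_sigStar_add_tauStar_mul {z : ℂ}
    (hbwd : xl x (δ - 1) z - xl x (δ - 1) (z - 1) ≠ 0) :
    sig x st tt z = sigStar x st tt T δ (z - 1) +
      tauStar x st tt T δ (z - 1) * (xl x (δ - 1) z - xl x (δ - 1) (z - 1)) := by
  simp only [sigStar, tauStar, sub_add_cancel]
  rw [div_mul_cancel₀ _ hbwd]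
  ring

theorem tau_eq_sigStar_sub_div {z : ℂ}
    (hbwd : xl x (δ - 1) z - xl x (δ - 1) (z - 1) ≠ 0)
    (hfwd : xl x (δ - 1) (z + 1) - xl x (δ - 1) z ≠ 0) :
    T δ z = (sigStar x st tt T δ (z + 1) - sigStar x st tt T δ (z - 1) -
        tauStar x st tt T δ (z - 1) * (xl x (δ - 1) z - xl x (δ - 1) (z - 1))) /
      (xl x (δ - 1) (z + 1) - xl x (δ - 1) z) := by
  rw [eq_div_iff hfwd, sub_sub, ← sig_eq_sigStar_add_tauStar_mul x st tt T δ hbwd]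
  simp only [sigStar, add_sub_cancel_right]
  ring

variable {x st tt T}

theorem tauStar_mul_sub_sigStar_sub (hT : TauFamily x st tt T) {u : ℂ}
    (hbwd : xl x (δ - 1) u - xl x (δ - 1) (u - 1) ≠ 0) :
    tauStar x st tt T δ (u - 1) * (xl x (δ - 1) u - xl x (δ - 1) (u - 1)) -
        (sigStar x st tt T δ u - sigStar x st tt T δ (u - 1)) =
      -tauNum x st tt (δ - 1) u := by
  have hTu := hT δ (u - 1)
  have hA : xl x (δ + 1) (u - 1) = xl x (δ - 1) u := by unfold xl; push_cast; ring_nf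
  have hB : xl x (δ + 1) (u - 1 - 1) = xl x (δ - 1) (u - 1) := by unfold xl; push_cast; ring_nf
  have hC : u - 1 + (δ : ℂ) = u + ((δ - 1 : ℝ) : ℂ) := by push_cast; ring
  rw [hA, hB, hC] at hTu
  simp only [sigStar, tauStar, tauNum, sub_add_cancel]
  rw [div_mul_cancel₀ _ hbwd]
  linear_combination -hTu

end Adjoint

/-- Proposition 3.2 (with `δ = ν - μ`). -/
theorem prop3_2
    (w : ℂ) (x : ℂ → ℂ) (a g : ℝ → ℂ)
    (hlat : IsNonUniformLattice w x a g)
    (st tt : Polynomial ℂ) (hst : st.degree ≤ 2) (htt : tt.degree ≤ 1)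
    (T : ℝ → ℂ → ℂ) (hT : TauFamily x st tt T) (δ : ℝ) (lam : ℂ) :
    ∀ z : ℂ,
      xl x (δ - 1) z - xl x (δ - 1) (z - 1) ≠ 0 →
      xl x (δ - 1) (z + 1) - xl x (δ - 1) z ≠ 0 →
      xl x δ z - xl x δ (z - 1) ≠ 0 →
      xl x δ (z + 1) - xl x δ z ≠ 0 →
      (sig x st tt z = sigStar x st tt T δ (z - 1) +
          tauStar x st tt T δ (z - 1) * (xl x (δ - 1) z - xl x (δ - 1) (z - 1))) ∧
      (T δ z = (sigStar x st tt T δ (z + 1) - sigStar x st tt T δ (z - 1) -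
          tauStar x st tt T δ (z - 1) * (xl x (δ - 1) z - xl x (δ - 1) (z - 1))) /
        (xl x (δ - 1) (z + 1) - xl x (δ - 1) z)) ∧
      (lam = (lam - kap a g st tt (2 * δ - 1)) -
        del x (δ - 1)
          (fun u => (tauStar x st tt T δ (u - 1) *
              (xl x (δ - 1) u - xl x (δ - 1) (u - 1)) -
              (sigStar x st tt T δ u - sigStar x st tt T δ (u - 1))) /
            (xl x δ u - xl x δ (u - 1))) z) := by
  intro z hbwd hfwd hbwdδ hfwdδ
  refine ⟨sig_eq_sigStar_add_tauStar_mul x st tt T δ hbwd,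
    tau_eq_sigStar_sub_div x st tt T δ hbwd hfwd, ?_⟩
  obtain ⟨b, hL⟩ := hlat.exists_latticeIdentities
  have hκ := hL.del_tauNum_div hst htt (δ - 1) hfwd
  simp only [sub_add_cancel, show 2 * (δ - 1) + 1 = 2 * δ - 1 by ring] at hκ
  specialize hκ hfwdδ hbwdδ
  have hbwd_succ : xl x (δ - 1) (z + 1) - xl x (δ - 1) (z + 1 - 1) ≠ 0 := by
    rwa [add_sub_cancel_right]
  simp only [del] at hκ ⊢
  rw [tauStar_mul_sub_sigStar_sub δ hT hbwd, tauStar_mul_sub_sigStar_sub δ hT hbwd_succ, ← hκ]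
  ring
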